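/- arXiv:2210.14254 — 2 statements merged into one kernel-verified Lean document; each statement's English description precedes it below -/
import Mathlib

section
/- If instead the label subsets have different sizes K_1, ..., K_M (not all equal), the two-stage PPTS sampling probability for an instance with label in subset C_i equals (∏_{j≠i} K_j) / (Σ_{i'} (∏_{j≠i'} K_j) · N_{i'}) where N_{i'} is the total instance count in subset C_{i'}; hence if the K_i differ and instance counts are positive, instances in different subsets can have different selection probabilities. -/
open Finset

/-- PPTS with label subsets of possibly different sizes `K i`.  The two-stage sampling
probability for an instance with label `c ∈ C i` equals
`(∏_{j ≠ i} K j) / (∑_{i'} (∏_{j ≠ i'} K j) · N i')` where `N i'` is the total instance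
count in subset `C i'`; hence when the sizes differ the selection probabilities of instances
in different subsets can differ. -/
theorem ppts_unequal_subset_sizes {α : Type*} [DecidableEq α] (M : ℕ)
    (K : Fin M → ℕ) (C : Fin M → Finset α) (n : α → ℕ)
    (hcard : ∀ i, (C i).card = K i)
    (hne : ∀ i, (C i).Nonempty)
    (hdisj : ∀ i j, i ≠ j → Disjoint (C i) (C j))
    (hn : ∀ i, ∀ c ∈ C i, 0 < n c)
    (i : Fin M) (c : α) (hc : c ∈ C i) :
    ∑ T ∈ (Fintype.piFinset C).filter (fun T => T i = c),
        ((∑ j, n (T j) : ℝ) / (∑ T' ∈ Fintype.piFinset C, (∑ j, n (T' j) : ℝ)))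
          * (1 / (∑ j, n (T j) : ℝ))
      = (∏ j ∈ Finset.univ.erase i, (K j : ℝ))
        / (∑ i' : Fin M,
            (∏ j ∈ Finset.univ.erase i', (K j : ℝ)) * (∑ c' ∈ C i', (n c' : ℝ))) := by
  classical
  set S : ℝ := ∑ T' ∈ Fintype.piFinset C, (∑ j, n (T' j) : ℝ) with hS
  have hpos : ∀ T ∈ Fintype.piFinset C, (0:ℝ) < ∑ j, (n (T j) : ℝ) := by
    intro T hT
    rw [Fintype.mem_piFinset] at hT
    refine Finset.sum_pos' (fun j _ => by positivity) ⟨i, Finset.mem_univ i, ?_⟩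
    exact_mod_cast hn i (T i) (hT i)
  have key : ∀ (f : Fin M → α → ℝ),
      ∑ T ∈ Fintype.piFinset C, ∏ j, f j (T j) = ∏ j, ∑ x ∈ C j, f j x :=
    fun f => (Finset.prod_univ_sum C f).symm
  have hSval : S = ∑ i' : Fin M,
      (∏ j ∈ Finset.univ.erase i', (K j : ℝ)) * (∑ c' ∈ C i', (n c' : ℝ)) := by
    rw [hS, Finset.sum_comm]
    refine Finset.sum_congr rfl (fun i' _ => ?_)
    have h1 : ∀ T ∈ Fintype.piFinset C,
        (n (T i') : ℝ) = ∏ j, (fun j x => if j = i' then (n x : ℝ) else 1) j (T j) := by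
      intro T _
      rw [← Finset.mul_prod_erase Finset.univ _ (Finset.mem_univ i')]
      have h2 : ∏ j ∈ Finset.univ.erase i',
          (fun j x => if j = i' then (n x : ℝ) else 1) j (T j) = 1 :=
        Finset.prod_eq_one (fun j hj => by simp [(Finset.mem_erase.mp hj).1])
      rw [h2, mul_one]
      simp
    rw [Finset.sum_congr rfl h1,
      key (fun j x => if j = i' then (n x : ℝ) else 1),
      ← Finset.mul_prod_erase Finset.univ _ (Finset.mem_univ i')]
    rw [show (∑ x ∈ C i', if i' = i' then (n x : ℝ) else 1) = ∑ c' ∈ C i', (n c' : ℝ)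
      from Finset.sum_congr rfl (fun x _ => by simp)]
    rw [mul_comm]
    congr 1
    refine Finset.prod_congr rfl (fun j hj => ?_)
    simp [(Finset.mem_erase.mp hj).1, hcard j]
  have hcardf : ((Fintype.piFinset C).filter (fun T => T i = c)).card
      = ∏ j ∈ Finset.univ.erase i, K j := by
    have h0 : (((Fintype.piFinset C).filter (fun T => T i = c)).card : ℝ)
        = ∏ j ∈ Finset.univ.erase i, (K j : ℝ) := by
      rw [Finset.card_eq_sum_ones, Nat.cast_sum]
      push_cast
      rw [Finset.sum_filter]
      have h1 : ∀ T ∈ Fintype.piFinset C,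
          (if T i = c then (1:ℝ) else 0)
            = ∏ j, (fun j x => if j = i then (if x = c then (1:ℝ) else 0) else 1) j (T j) := by
        intro T _
        rw [← Finset.mul_prod_erase Finset.univ _ (Finset.mem_univ i)]
        have h2 : ∏ j ∈ Finset.univ.erase i,
            (fun j x => if j = i then (if x = c then (1:ℝ) else 0) else 1) j (T j) = 1 :=
          Finset.prod_eq_one (fun j hj => by simp [(Finset.mem_erase.mp hj).1])
        rw [h2, mul_one]
        simp
      rw [Finset.sum_congr rfl h1,
        key (fun j x => if j = i then (if x = c then (1:ℝ) else 0) else 1),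
        ← Finset.mul_prod_erase Finset.univ _ (Finset.mem_univ i)]
      rw [show (∑ x ∈ C i, if i = i then (if x = c then (1:ℝ) else 0) else 1)
          = ∑ x ∈ C i, (if x = c then (1:ℝ) else 0)
        from Finset.sum_congr rfl (fun x _ => by simp)]
      rw [Finset.sum_ite_eq' (C i) c (fun _ => (1:ℝ))]
      simp only [hc, if_pos, one_mul]
      refine Finset.prod_congr rfl (fun j hj => ?_)
      simp [(Finset.mem_erase.mp hj).1, hcard j]
    exact_mod_cast h0
  have hSpos : 0 < S := by
    rw [hS]
    have hneT : (Fintype.piFinset C).Nonempty := by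
      rw [Fintype.piFinset_nonempty]; exact fun j => hne j
    obtain ⟨T, hT⟩ := hneT
    exact Finset.sum_pos' (fun T' hT' => le_of_lt (hpos T' hT')) ⟨T, hT, hpos T hT⟩
  have hterm : ∀ T ∈ (Fintype.piFinset C).filter (fun T => T i = c),
      ((∑ j, n (T j) : ℝ) / S) * (1 / (∑ j, n (T j) : ℝ)) = 1 / S := by
    intro T hT
    have hT' := (Finset.mem_filter.mp hT).1
    have hx := hpos T hT'
    field_simp
  rw [Finset.sum_congr rfl hterm, Finset.sum_const, nsmul_eq_mul, hcardf, hSval]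
  push_cast
  rw [mul_one_div]
end

section
/- Under PPTS, the probability that the sampled task contains a fixed label c in subset C_i equals (K^(M-1) · (n(c) + S_{-i}/K)) / (K^(M-1) · S) = (n(c) + S_{-i}/K)/S, where S is the total instance count over all labels and S_{-i} is the total over all subsets except C_i. -/
/-!
Sum the task sizes label by label: a label of `C j` lies in `∏_{k ≠ j} |C k|` of the tuples.
Over all tasks this gives `K^(M-1) · S`; over the tasks through `c` (the product over
`C` with `C i` replaced by `{c}`) the label `c` is counted `K^(M-1)` times and every other label
`K^(M-2) = K^(M-1) / K` times, giving `K^(M-1) · (n c + S₋ᵢ / K)`.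
-/

open Finset

namespace Fintype

variable {ι κ : Type*} [DecidableEq ι] [Fintype ι] [DecidableEq κ]

lemma sum_piFinset_apply_eq_prod_erase_card_smul {M : Type*} [AddCommMonoid M]
    (s : ι → Finset κ) (f : κ → M) (i : ι) :
    ∑ g ∈ piFinset s, f (g i) = (∏ j ∈ univ.erase i, #(s j)) • ∑ b ∈ s i, f b := by
  rw [← sum_fiberwise_of_maps_to (g := fun g => g i) fun g hg => mem_piFinset.1 hg i, smul_sum]
  refine Finset.sum_congr rfl fun b hb => ?_
  rw [Finset.sum_congr rfl fun g hg => congrArg f (mem_filter.1 hg).2, sum_const,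
    card_filter_piFinset_eq_of_mem s i hb]

lemma sum_piFinset_sum_apply_eq_prod_card_mul {F : Type*} [Field F] [CharZero F]
    (s : ι → Finset κ) (f : κ → F) :
    ∑ g ∈ piFinset s, ∑ i, f (g i) = (∏ i, (#(s i) : F)) * ∑ i, (∑ b ∈ s i, f b) / #(s i) := by
  rw [sum_comm, mul_sum]
  refine Finset.sum_congr rfl fun i _ => ?_
  rw [sum_piFinset_apply_eq_prod_erase_card_smul, nsmul_eq_mul, ← mul_prod_erase _ _ (mem_univ i)]
  push_cast
  rcases eq_or_ne (#(s i) : F) 0 with h | h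
  · rw [Nat.cast_eq_zero, Finset.card_eq_zero] at h
    simp [h]
  · field_simp

end Fintype

theorem ppts_label_in_task_probability_general {α : Type*} [DecidableEq α] (M K : ℕ)
    (C : Fin M → Finset α) (n : α → ℕ)
    (hcard : ∀ i, (C i).card = K)
    (i : Fin M) (c : α) (hc : c ∈ C i) :
    ∑ T ∈ (Fintype.piFinset C).filter (fun T => T i = c),
        ((∑ j, n (T j) : ℝ) / (∑ T' ∈ Fintype.piFinset C, (∑ j, n (T' j) : ℝ)))
      = ((n c : ℝ) + (∑ i' ∈ Finset.univ.erase i, ∑ c' ∈ C i', (n c' : ℝ)) / K)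
          / (∑ i' : Fin M, ∑ c' ∈ C i', (n c' : ℝ)) := by
  have hK : (K : ℝ) ≠ 0 := by
    rw [← hcard i]
    exact_mod_cast (card_pos.2 ⟨c, hc⟩).ne'
  have hnum : ∑ T ∈ (Fintype.piFinset C).filter (fun T => T i = c), (∑ j, n (T j) : ℝ)
      = K ^ (M - 1) * (n c + (∑ i' ∈ univ.erase i, ∑ c' ∈ C i', (n c' : ℝ)) / K) := by
    have hC : ∀ j ∈ univ.erase i, Function.update C i {c} j = C j := fun j hj =>
      Function.update_of_ne (ne_of_mem_erase hj) _ _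
    rw [← Fintype.piFinset_update_singleton_eq_filter_piFinset_eq _ _ hc,
      Fintype.sum_piFinset_sum_apply_eq_prod_card_mul _ fun x => (n x : ℝ),
      ← mul_prod_erase _ _ (mem_univ i), ← add_sum_erase _ _ (mem_univ i),
      prod_congr rfl fun j hj => congrArg _ (congrArg _ (hC j hj)),
      sum_congr (s₁ := univ.erase i) rfl fun j hj => by rw [hC j hj]]
    simp only [Function.update_self, card_singleton, sum_singleton, Nat.cast_one, div_one,
      one_mul, hcard, prod_const, card_erase_of_mem (mem_univ i), card_univ, Fintype.card_fin,
      ← sum_div]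
  have hden : ∑ T ∈ Fintype.piFinset C, (∑ j, n (T j) : ℝ)
      = K ^ (M - 1) * ∑ i' : Fin M, ∑ c' ∈ C i', (n c' : ℝ) := by
    rw [Fintype.sum_piFinset_sum_apply_eq_prod_card_mul _ fun x => (n x : ℝ),
      ← mul_prod_erase _ _ (mem_univ i)]
    simp only [hcard, prod_const, card_erase_of_mem (mem_univ i), card_univ, Fintype.card_fin,
      ← sum_div]
    field_simp
  rw [← sum_div, hnum, hden, mul_div_mul_left _ _ (pow_ne_zero _ hK)]

/-- Under PPTS, the probability that the sampled task contains a fixed label `c` in subset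
`C i` equals `(n c + S₋ᵢ / K) / S`, where `S` is the total instance count and `S₋ᵢ` is the
total over all subsets except `C i`. -/
theorem ppts_label_in_task_probability {α : Type*} [DecidableEq α] (M K : ℕ)
    (hM : 0 < M) (hK : 0 < K)
    (C : Fin M → Finset α) (n : α → ℕ)
    (hcard : ∀ i, (C i).card = K)
    (hdisj : ∀ i j, i ≠ j → Disjoint (C i) (C j))
    (hn : ∀ i, ∀ c ∈ C i, 0 < n c)
    (i : Fin M) (c : α) (hc : c ∈ C i) :
    ∑ T ∈ (Fintype.piFinset C).filter (fun T => T i = c),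
        ((∑ j, n (T j) : ℝ) / (∑ T' ∈ Fintype.piFinset C, (∑ j, n (T' j) : ℝ)))
      = ((n c : ℝ) + (∑ i' ∈ Finset.univ.erase i, ∑ c' ∈ C i', (n c' : ℝ)) / K)
          / (∑ i' : Fin M, ∑ c' ∈ C i', (n c' : ℝ)) :=
  ppts_label_in_task_probability_general M K C n hcard i c hc
end
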